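/- arXiv:1302.5506 — 2 statements merged into one kernel-verified Lean document; each statement's English description precedes it below -/
import Mathlib

section
/- Let n ≥ 1, let m, r be natural numbers with m < r, and let U be an open subset of ℝⁿ. Then every morphism of sheaves u : C^m → C^r over U is zero: for every open V ⊆ U, every φ ∈ C^m(V) and every x ∈ V, u_V(φ)(x) = 0. -/
/-!
Suppose `u φ` does not vanish at `x₀`. A sum of rescaled bumps gives a `C^m` staircase `E` of one
variable, equal to the constant `η_k = 4^(-k m) 2^(-k)` near each `t_k = 4^(-k)`; it is `C^m` because
`η_k 4^(k j) ≤ 2^(-k)` for `j ≤ m`. Put `g x = E (x_{i₀} - x₀_{i₀}) φ x`. By locality and linearity,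
`u g = η_k • u φ` near `x₀ + t_k e_{i₀}`. On the line `t ↦ x₀ + t e_{i₀}` the function `u g` is
`C^(m+1)`, and its derivatives of order `≤ m` at `0` are limits of `η_k` times bounded quantities,
hence vanish; by Taylor, `u g = O(t^(m+1))` there. Since `t_k^(m+1) = o(η_k)`, this forces
`u φ (x₀ + t_k e_{i₀}) → 0`, i.e. `u φ x₀ = 0`.
-/

open scoped BigOperators

/-- The partial derivative in the `i`-th coordinate direction. -/
noncomputable def pderivE (n : ℕ) (i : Fin n) (f : EuclideanSpace ℝ (Fin n) → ℝ) :
    EuclideanSpace ℝ (Fin n) → ℝ :=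
  fun x => fderiv ℝ f x (EuclideanSpace.single i 1)

/-- The iterated partial derivative `∂^α` for a multi-index `α : Fin n → ℕ`. -/
noncomputable def partialD (n : ℕ) (α : Fin n → ℕ) (f : EuclideanSpace ℝ (Fin n) → ℝ) :
    EuclideanSpace ℝ (Fin n) → ℝ :=
  (List.finRange n).foldr (fun i g => (pderivE n i)^[α i] g) f

/-- The finset of multi-indices `α : Fin n → ℕ` of length `|α| = ∑ i, α i ≤ k`. -/
def multiIdx (n k : ℕ) : Finset (Fin n → ℕ) :=
  (Finset.Iic fun _ : Fin n => k).filter fun α => (∑ i, α i) ≤ k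

/-- A morphism of sheaves `C^m → C^r` over the open set `U ⊆ ℝⁿ`:  a family of
`ℝ`-linear maps `C^m(V) → C^r(V)`, for open `V ⊆ U`, commuting with restriction.
Sections of `C^k` over `V` are represented by total functions that are `C^k` on `V`;
`restrict` encodes both compatibility with restriction and the fact that `app V f`
only depends on `f|_V`. -/
structure SheafHom (n m r : ℕ) (U : Set (EuclideanSpace ℝ (Fin n))) where
  app : Set (EuclideanSpace ℝ (Fin n)) → (EuclideanSpace ℝ (Fin n) → ℝ) →
    (EuclideanSpace ℝ (Fin n) → ℝ)
  map_contDiffOn : ∀ V, V ⊆ U → IsOpen V → ∀ f, ContDiffOn ℝ (m : ℕ∞) f V →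
    ContDiffOn ℝ (r : ℕ∞) (app V f) V
  map_add : ∀ V, V ⊆ U → IsOpen V → ∀ f g, ContDiffOn ℝ (m : ℕ∞) f V →
    ContDiffOn ℝ (m : ℕ∞) g V → ∀ x ∈ V, app V (f + g) x = app V f x + app V g x
  map_smul : ∀ V, V ⊆ U → IsOpen V → ∀ (c : ℝ) f, ContDiffOn ℝ (m : ℕ∞) f V →
    ∀ x ∈ V, app V (c • f) x = c * app V f x
  restrict : ∀ V, V ⊆ U → IsOpen V → ∀ W, W ⊆ V → IsOpen W →
    ∀ f g, ContDiffOn ℝ (m : ℕ∞) f V → ContDiffOn ℝ (m : ℕ∞) g W →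
    (∀ x ∈ W, f x = g x) → ∀ x ∈ W, app V f x = app W g x

open Set Filter Topology Asymptotics

theorem iteratedDeriv_const_mul_comp_const_mul {𝕜 : Type*} [NontriviallyNormedField 𝕜]
    {ψ : 𝕜 → 𝕜} {j : ℕ} (hψ : ContDiff 𝕜 j ψ) (c a x : 𝕜) :
    iteratedDeriv j (fun s => c * ψ (a * s)) x = c * (a ^ j * iteratedDeriv j ψ (a * x)) := by
  rw [iteratedDeriv_const_mul_field, iteratedDeriv_comp_const_mul hψ]

theorem ContDiffBump.exists_norm_iteratedDeriv_le {c : ℝ} (ψ : ContDiffBump c) :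
    ∃ K : ℕ → ℝ, ∀ j x, ‖iteratedDeriv j (⇑ψ) x‖ ≤ K j := by
  have hψ : ContDiff ℝ (⊤ : ℕ∞) (⇑ψ) := ψ.contDiff
  choose K hK using fun j => (hψ.continuous_iteratedFDeriv (m := j)
    (mod_cast le_top)).bounded_above_of_compact_support (ψ.hasCompactSupport.iteratedFDeriv j)
  exact ⟨K, fun j x => by simpa only [norm_iteratedFDeriv_eq_norm_iteratedDeriv] using hK j x⟩

theorem iteratedDerivWithin_eq_zero_of_eventuallyEq_smul {𝕜 F ι : Type*}
    [NontriviallyNormedField 𝕜] [NormedAddCommGroup F] [NormedSpace 𝕜 F] {l : Filter ι} [l.NeBot]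
    {f d : 𝕜 → F} {s : Set 𝕜}
    {x : 𝕜} {N : WithTop ℕ∞} {j : ℕ} {τ η : ι → 𝕜} (hs : UniqueDiffOn 𝕜 s)
    (hf : ContDiffOn 𝕜 N f s) (hd : ContDiffOn 𝕜 N d s) (hj : j ≤ N) (hx : x ∈ s)
    (hτ : Tendsto τ l (𝓝[s] x)) (hη : Tendsto η l (𝓝 0))
    (hfd : ∀ᶠ i in l, f =ᶠ[𝓝[s] τ i] η i • d) :
    iteratedDerivWithin j f s x = 0 := by
  have hf_lim := ((hf.continuousOn_iteratedDerivWithin hj hs) x hx).tendsto.comp hτ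
  have hd_lim := ((hd.continuousOn_iteratedDerivWithin hj hs) x hx).tendsto.comp hτ
  have h_eq : (fun i => η i • iteratedDerivWithin j d s (τ i)) =ᶠ[l]
      fun i => iteratedDerivWithin j f s (τ i) := by
    filter_upwards [hfd, (tendsto_nhdsWithin_iff.1 hτ).2] with i hi hτi
    rw [hi.iteratedDerivWithin_eq (hi.eq_of_nhdsWithin hτi), iteratedDerivWithin_const_smul_field]
  refine tendsto_nhds_unique hf_lim (Tendsto.congr' h_eq ?_)
  simpa using hη.smul hd_lim

theorem exists_norm_le_mul_pow_of_iteratedDerivWithin_eq_zero {E : Type*} [NormedAddCommGroup E]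
    [NormedSpace ℝ E] {f : ℝ → E} {a b : ℝ} {n : ℕ} (hab : a ≤ b)
    (hf : ContDiffOn ℝ (n + 1) f (Icc a b))
    (hf₀ : ∀ j ≤ n, iteratedDerivWithin j f (Icc a b) a = 0) :
    ∃ C, ∀ x ∈ Icc a b, ‖f x‖ ≤ C * (x - a) ^ (n + 1) := by
  obtain ⟨C, hC⟩ := exists_taylor_mean_remainder_bound hab hf
  refine ⟨C, fun x hx => ?_⟩
  have h_taylor : taylorWithinEval f n (Icc a b) a x = 0 := by
    rw [taylor_within_apply]
    refine Finset.sum_eq_zero fun j hj => ?_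
    rw [hf₀ j (Nat.lt_succ_iff.mp (Finset.mem_range.mp hj)), smul_zero]
  simpa [h_taylor] using hC x hx

theorem eq_zero_of_eventuallyEq_smul_of_isLittleO {F ι : Type*} [NormedAddCommGroup F]
    [NormedSpace ℝ F] {l : Filter ι} [l.NeBot] {f d : ℝ → F} {s : Set ℝ} {n : ℕ} {τ η : ι → ℝ}
    (hs : s ∈ 𝓝 0) (hf : ContDiffOn ℝ (n + 1) f s) (hd : ContDiffOn ℝ (n + 1) d s)
    (hτ : Tendsto τ l (𝓝[>] 0)) (hη : Tendsto η l (𝓝 0)) (hη₀ : ∀ᶠ i in l, η i ≠ 0)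
    (hτη : (fun i => τ i ^ (n + 1)) =o[l] η) (hfd : ∀ᶠ i in l, f =ᶠ[𝓝 (τ i)] η i • d) :
    d 0 = 0 := by
  obtain ⟨c, hc, hcs⟩ := exists_Ico_subset_of_mem_nhds hs ⟨1, one_pos⟩
  set b := c / 2
  have hb : 0 < b := half_pos hc
  have hbs : Icc 0 b ⊆ s := (Icc_subset_Ico_right (half_lt_self hc)).trans hcs
  have hτ' : Tendsto τ l (𝓝[Icc 0 b] 0) :=
    hτ.mono_right (nhdsWithin_le_of_mem (Icc_mem_nhdsGT hb))
  have hτ_mem : ∀ᶠ i in l, τ i ∈ Icc 0 b := (tendsto_nhdsWithin_iff.1 hτ').2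
  have hf_jet : ∀ j ≤ n, iteratedDerivWithin j f (Icc 0 b) 0 = 0 := fun j hj =>
    iteratedDerivWithin_eq_zero_of_eventuallyEq_smul (uniqueDiffOn_Icc hb) (hf.mono hbs)
      (hd.mono hbs) (by exact_mod_cast hj.trans n.le_succ) (left_mem_Icc.2 hb.le) hτ' hη
      (hfd.mono fun _ h => h.filter_mono nhdsWithin_le_nhds)
  obtain ⟨C, hC⟩ :=
    exists_norm_le_mul_pow_of_iteratedDerivWithin_eq_zero hb.le (hf.mono hbs) hf_jet
  have hfτ : (fun i => f (τ i)) =o[l] η := by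
    refine IsBigO.trans_isLittleO (isBigO_iff.2 ⟨C, ?_⟩) hτη
    filter_upwards [hτ_mem] with i hi
    simpa [abs_of_nonneg hi.1] using hC _ hi
  have hdτ : Tendsto (fun i => d (τ i)) l (𝓝 0) := by
    refine hfτ.tendsto_inv_smul_nhds_zero.congr' ?_
    filter_upwards [hfd, hη₀] with i hi hi₀
    rw [hi.eq_of_nhds, Pi.smul_apply, inv_smul_smul₀ hi₀]
  have hd₀ : ContinuousWithinAt d (Icc 0 b) 0 := hd.continuousOn.mono hbs 0 (left_mem_Icc.2 hb.le)
  exact tendsto_nhds_unique (hd₀.tendsto.comp hτ') hdτ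

noncomputable section

def stepBump : ContDiffBump (1 : ℝ) := ⟨8⁻¹, 4⁻¹, by norm_num, by norm_num⟩

def stairHeight (m k : ℕ) : ℝ := ((4 : ℝ)⁻¹ ^ k) ^ m * 2⁻¹ ^ k

def staircase (m : ℕ) (s : ℝ) : ℝ := ∑' k : ℕ, stairHeight m k * stepBump (4 ^ k * s)

end

theorem stairHeight_pos (m k : ℕ) : 0 < stairHeight m k := by
  rw [stairHeight]; positivity

theorem stairHeight_mul_pow_le {m j : ℕ} (k : ℕ) (hj : j ≤ m) :
    stairHeight m k * (4 ^ k) ^ j ≤ 2⁻¹ ^ k := by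
  have h4 : (1 : ℝ) ≤ 4 ^ k := one_le_pow₀ (by norm_num)
  have h : ((4 : ℝ)⁻¹ ^ k) ^ m * (4 ^ k) ^ j ≤ 1 := by
    rw [inv_pow, inv_pow, inv_mul_le_one₀ (by positivity)]
    exact pow_le_pow_right₀ h4 hj
  calc stairHeight m k * (4 ^ k) ^ j = (((4 : ℝ)⁻¹ ^ k) ^ m * (4 ^ k) ^ j) * 2⁻¹ ^ k := by
        rw [stairHeight]; ring
    _ ≤ 2⁻¹ ^ k := mul_le_of_le_one_left (by positivity) h

theorem contDiff_staircase (m : ℕ) : ContDiff ℝ (m : ℕ∞) (staircase m) := by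
  obtain ⟨K, hK⟩ := stepBump.exists_norm_iteratedDeriv_le
  have hterm : ∀ k, ContDiff ℝ (m : ℕ∞) fun s : ℝ => stairHeight m k * stepBump (4 ^ k * s) :=
    fun k => contDiff_const.mul (stepBump.contDiff.comp (contDiff_const.mul contDiff_id))
  have hsum : ∀ j : ℕ, (j : ℕ∞) ≤ m → Summable fun k : ℕ => K j * (2 : ℝ)⁻¹ ^ k :=
    fun j _ => (summable_geometric_of_lt_one (by norm_num) (by norm_num)).mul_left _
  refine contDiff_tsum hterm hsum fun j k s hj => ?_
  rw [norm_iteratedFDeriv_eq_norm_iteratedDeriv,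
    iteratedDeriv_const_mul_comp_const_mul (stepBump.contDiff (n := j)), ← mul_assoc, norm_mul,
    mul_comm (K j)]
  rw [Real.norm_of_nonneg (mul_nonneg (stairHeight_pos m k).le (by positivity))]
  exact mul_le_mul (stairHeight_mul_pow_le k (mod_cast hj)) (hK j _) (norm_nonneg _)
    (by positivity)

theorem stepBump_four_pow_mul_eq_zero {j k : ℕ} (hjk : j ≠ k) {s : ℝ}
    (hs : |4 ^ k * s - 1| < 8⁻¹) : stepBump (4 ^ j * s) = 0 := by
  refine stepBump.zero_of_le_dist ?_
  obtain ⟨hs₁, hs₂⟩ := abs_lt.1 hs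
  have hs₀ : 0 < s := pos_of_mul_pos_right (by linarith) (by positivity : (0 : ℝ) ≤ 4 ^ k)
  show 4⁻¹ ≤ dist (4 ^ j * s) 1
  rw [Real.dist_eq, le_abs]
  rcases hjk.lt_or_gt with hlt | hgt
  · have h4 : (4 : ℝ) ^ j * 4 ≤ 4 ^ k := pow_succ (4 : ℝ) j ▸ pow_le_pow_right₀ (by norm_num) hlt
    have := mul_le_mul_of_nonneg_right h4 hs₀.le
    right; nlinarith
  · have h4 : (4 : ℝ) ^ k * 4 ≤ 4 ^ j := pow_succ (4 : ℝ) k ▸ pow_le_pow_right₀ (by norm_num) hgt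
    have := mul_le_mul_of_nonneg_right h4 hs₀.le
    left; nlinarith

theorem staircase_eventuallyEq (m k : ℕ) :
    staircase m =ᶠ[𝓝 ((4 : ℝ)⁻¹ ^ k)] fun _ => stairHeight m k := by
  have hc : ContinuousAt (fun s : ℝ => |4 ^ k * s - 1|) (4⁻¹ ^ k) := by fun_prop
  have hk : |(4 : ℝ) ^ k * 4⁻¹ ^ k - 1| < 8⁻¹ := by
    rw [← mul_pow, mul_inv_cancel₀ (by norm_num : (4 : ℝ) ≠ 0)]; norm_num
  filter_upwards [hc.eventually_lt continuousAt_const hk] with s hs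
  rw [staircase, tsum_eq_single k fun j hj => by rw [stepBump_four_pow_mul_eq_zero hj hs, mul_zero],
    stepBump.one_of_mem_closedBall (by rw [Metric.mem_closedBall, Real.dist_eq]; exact hs.le),
    mul_one]

theorem tendsto_stairHeight (m : ℕ) : Tendsto (stairHeight m) atTop (𝓝 0) := by
  have h4 := tendsto_pow_atTop_nhds_zero_of_lt_one (by norm_num : (0 : ℝ) ≤ 4⁻¹) (by norm_num)
  have h2 := tendsto_pow_atTop_nhds_zero_of_lt_one (by norm_num : (0 : ℝ) ≤ 2⁻¹) (by norm_num)
  have h := (h4.pow m).mul h2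
  rwa [mul_zero] at h

theorem isLittleO_pow_stairHeight (m : ℕ) :
    (fun k : ℕ => ((4 : ℝ)⁻¹ ^ k) ^ (m + 1)) =o[atTop] stairHeight m := by
  have h2 := tendsto_pow_atTop_nhds_zero_of_lt_one (by norm_num : (0 : ℝ) ≤ 2⁻¹) (by norm_num)
  refine (((isBigO_refl (stairHeight m) atTop).mul_isLittleO
    ((isLittleO_one_iff ℝ).2 h2)).congr_left fun k => ?_).congr_right fun k => mul_one _
  rw [stairHeight, pow_succ, show (4 : ℝ)⁻¹ = 2⁻¹ * 2⁻¹ by norm_num, mul_pow]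
  ring

theorem SheafHom.app_eventuallyEq_smul {n m r : ℕ} {U V : Set (EuclideanSpace ℝ (Fin n))}
    (u : SheafHom n m r U) (hVU : V ⊆ U) (hV : IsOpen V) {f φ : EuclideanSpace ℝ (Fin n) → ℝ}
    (hf : ContDiffOn ℝ (m : ℕ∞) f V) (hφ : ContDiffOn ℝ (m : ℕ∞) φ V) {x : EuclideanSpace ℝ (Fin n)}
    (hx : x ∈ V) {c : ℝ} (hfφ : f =ᶠ[𝓝 x] c • φ) : u.app V f =ᶠ[𝓝 x] c • u.app V φ := by
  obtain ⟨W, hW_eq, hW, hxW⟩ := mem_nhds_iff.1 hfφ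
  have hWV : W ∩ V ⊆ V := inter_subset_right
  have hφW : ContDiffOn ℝ (m : ℕ∞) φ (W ∩ V) := hφ.mono hWV
  filter_upwards [(hW.inter hV).mem_nhds ⟨hxW, hx⟩] with y hy
  calc u.app V f y = u.app (W ∩ V) (c • φ) y :=
        u.restrict V hVU hV _ hWV (hW.inter hV) f _ hf (hφW.const_smul c)
          (fun z hz => hW_eq hz.1) y hy
    _ = c * u.app (W ∩ V) φ y := u.map_smul _ (hWV.trans hVU) (hW.inter hV) c φ hφW y hy
    _ = c * u.app V φ y := by
        rw [u.restrict V hVU hV _ hWV (hW.inter hV) φ φ hφ hφW (fun _ _ => rfl) y hy]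

theorem stmt_1_general (n m r : ℕ) (hn : 1 ≤ n) (hmr : m < r)
    (U : Set (EuclideanSpace ℝ (Fin n)))
    (u : SheafHom n m r U) :
    ∀ V, V ⊆ U → IsOpen V → ∀ φ, ContDiffOn ℝ (m : ℕ∞) φ V → ∀ x ∈ V,
      u.app V φ x = 0 := by
  intro V hVU hV φ hφ x₀ hx₀
  let i₀ : Fin n := ⟨0, hn⟩
  let L : ℝ → EuclideanSpace ℝ (Fin n) := fun t => x₀ + t • EuclideanSpace.single i₀ 1
  let σ : EuclideanSpace ℝ (Fin n) → ℝ := fun x => (x - x₀) i₀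
  have hL : ContDiff ℝ (r : ℕ∞) L := by fun_prop
  have hσ : ContDiff ℝ (m : ℕ∞) σ := by fun_prop
  have hσL : ∀ t, σ (L t) = t := by simp [σ, L]
  have hLV : L ⁻¹' V ∈ 𝓝 0 := (hV.preimage hL.continuous).mem_nhds (by simpa [L] using hx₀)
  have hC : ∀ f, ContDiffOn ℝ (m : ℕ∞) f V → ContDiffOn ℝ (m + 1) (u.app V f ∘ L) (L ⁻¹' V) :=
    fun f hf => ((u.map_contDiffOn V hVU hV f hf).comp hL.contDiffOn (mapsTo_preimage L V)).of_le
      (by exact_mod_cast hmr)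
  let g := fun x => staircase m (σ x) * φ x
  have hg : ContDiffOn ℝ (m : ℕ∞) g V := ((contDiff_staircase m).comp hσ).contDiffOn.mul hφ
  have hτ : Tendsto (fun k : ℕ => (4 : ℝ)⁻¹ ^ k) atTop (𝓝[>] 0) :=
    tendsto_pow_atTop_nhdsWithin_zero_of_lt_one (by norm_num) (by norm_num)
  have hfd : ∀ᶠ k in atTop,
      u.app V g ∘ L =ᶠ[𝓝 ((4 : ℝ)⁻¹ ^ k)] stairHeight m k • (u.app V φ ∘ L) := by
    filter_upwards [(tendsto_nhds_of_tendsto_nhdsWithin hτ).eventually hLV] with k hk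
    have hσk := hσ.continuous.tendsto (L ((4 : ℝ)⁻¹ ^ k))
    rw [hσL] at hσk
    have hgk : g =ᶠ[𝓝 (L ((4 : ℝ)⁻¹ ^ k))] stairHeight m k • φ :=
      ((staircase_eventuallyEq m k).comp_tendsto hσk).mono fun x hx => congrArg (· * φ x) hx
    exact (u.app_eventuallyEq_smul hVU hV hg hφ hk hgk).comp_tendsto (hL.continuous.tendsto _)
  simpa [L] using eq_zero_of_eventuallyEq_smul_of_isLittleO hLV (hC g hg) (hC φ hφ) hτ
    (tendsto_stairHeight m) (Eventually.of_forall fun k => (stairHeight_pos m k).ne')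
    (isLittleO_pow_stairHeight m) hfd

/-- If `m < r`, every morphism of sheaves `u : C^m → C^r` over an open `U ⊆ ℝⁿ` is zero. -/
theorem stmt_1 (n m r : ℕ) (hn : 1 ≤ n) (hmr : m < r)
    (U : Set (EuclideanSpace ℝ (Fin n))) (hU : IsOpen U)
    (u : SheafHom n m r U) :
    ∀ V, V ⊆ U → IsOpen V → ∀ φ, ContDiffOn ℝ (m : ℕ∞) φ V → ∀ x ∈ V,
      u.app V φ x = 0 :=
  stmt_1_general n m r hn hmr U u
end

section
/- Let n ≥ 1, let m be a natural number, let U be an open subset of ℝⁿ, and for each multi-index α with |α| ≤ m let a_α : U → ℝ be a continuous function. If Σ_{|α| ≤ m} a_α(x) · (∂^α φ)(x) = 0 for every φ ∈ C^m(U) and every x ∈ U, then a_α = 0 identically on U for every α with |α| ≤ m. (Injectivity of the natural morphism from differential operators to sheaf morphisms.) -/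
open scoped BigOperators

/-! Test the operator against the monomial `y ↦ ∏ i, (y i - x i) ^ β i` centred at `x`. Evaluated
at `x`, its derivative `∂^α` vanishes unless `α = β`, where it equals `β! ≠ 0`; hence the identity
at `x` reduces to `a β x * β! = 0`. -/

theorem pderivE_const_smul {n : ℕ} (i : Fin n) (c : ℝ) (f : EuclideanSpace ℝ (Fin n) → ℝ) :
    pderivE n i (c • f) = c • pderivE n i f := by
  funext y
  simp [pderivE, fderiv_const_smul_field]

theorem iterate_pderivE_const_smul {n : ℕ} (i : Fin n) (k : ℕ) (c : ℝ)
    (f : EuclideanSpace ℝ (Fin n) → ℝ) :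
    (pderivE n i)^[k] (c • f) = c • (pderivE n i)^[k] f :=
  Function.Commute.iterate_left (fun f => pderivE_const_smul i c f) k f

section CenteredMonomial

variable {n : ℕ}

noncomputable def centeredMonomial (x : EuclideanSpace ℝ (Fin n)) (γ : Fin n → ℕ) :
    EuclideanSpace ℝ (Fin n) → ℝ :=
  fun y => ∏ i, (y i - x i) ^ γ i

variable (x : EuclideanSpace ℝ (Fin n))

theorem contDiff_centeredMonomial (γ : Fin n → ℕ) : ContDiff ℝ ⊤ (centeredMonomial x γ) :=
  contDiff_prod fun i _ =>
    (((EuclideanSpace.proj (𝕜 := ℝ) i).contDiff).sub contDiff_const).pow _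

theorem hasFDerivAt_centeredMonomial (γ : Fin n → ℕ) (y : EuclideanSpace ℝ (Fin n)) :
    HasFDerivAt (centeredMonomial x γ)
      (∑ i, (∏ j ∈ Finset.univ.erase i, (y j - x j) ^ γ j) •
        (((γ i : ℝ) * (y i - x i) ^ (γ i - 1)) •
          (EuclideanSpace.proj i : EuclideanSpace ℝ (Fin n) →L[ℝ] ℝ))) y := by
  refine HasFDerivAt.finsetProd fun i _ => ?_
  have hpow : HasDerivAt (fun t : ℝ => (t - x i) ^ γ i) ((γ i : ℝ) * (y i - x i) ^ (γ i - 1))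
      (y i) := by
    simpa using ((hasDerivAt_id (y i)).sub_const (x i)).fun_pow (γ i)
  exact hpow.comp_hasFDerivAt (f := fun z : EuclideanSpace ℝ (Fin n) => z i) y
    (EuclideanSpace.proj (𝕜 := ℝ) i).hasFDerivAt

theorem pderivE_centeredMonomial (γ : Fin n → ℕ) (i : Fin n) :
    pderivE n i (centeredMonomial x γ) =
      (γ i : ℝ) • centeredMonomial x (Function.update γ i (γ i - 1)) := by
  funext y
  have hproj : ∀ j, (EuclideanSpace.proj j : EuclideanSpace ℝ (Fin n) →L[ℝ] ℝ)
      (EuclideanSpace.single i 1) = if j = i then 1 else 0 := fun j => by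
    simp [PiLp.single_apply]
  simp only [pderivE, (hasFDerivAt_centeredMonomial x γ y).fderiv,
    FunLike.coe_sum, Finset.sum_apply, FunLike.coe_smul,
    Pi.smul_apply, hproj, smul_eq_mul, mul_ite, mul_one, mul_zero, Finset.sum_ite_eq',
    Finset.mem_univ, if_true, centeredMonomial]
  have hrest : ∀ j ∈ Finset.univ.erase i,
      (y j - x j) ^ Function.update γ i (γ i - 1) j = (y j - x j) ^ γ j := fun j hj => by
    rw [Function.update_of_ne (Finset.ne_of_mem_erase hj)]
  rw [← Finset.mul_prod_erase _ _ (Finset.mem_univ i), Function.update_self,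
    Finset.prod_congr rfl hrest]
  ring

theorem iterate_pderivE_centeredMonomial (i : Fin n) (k : ℕ) (γ : Fin n → ℕ) :
    (pderivE n i)^[k] (centeredMonomial x γ) =
      ((γ i).descFactorial k : ℝ) • centeredMonomial x (Function.update γ i (γ i - k)) := by
  induction k with
  | zero => simp
  | succ k ih =>
    rw [Function.iterate_succ_apply', ih, pderivE_const_smul, pderivE_centeredMonomial,
      smul_smul, Function.update_self, Function.update_idem, Nat.sub_sub,
      Nat.descFactorial_succ, Nat.cast_mul, mul_comm]

theorem foldr_iterate_pderivE_centeredMonomial (α : Fin n → ℕ) {l : List (Fin n)}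
    (hl : l.Nodup) (γ : Fin n → ℕ) :
    l.foldr (fun i g => (pderivE n i)^[α i] g) (centeredMonomial x γ) =
      (∏ i ∈ l.toFinset, ((γ i).descFactorial (α i) : ℝ)) •
        centeredMonomial x (fun i => if i ∈ l then γ i - α i else γ i) := by
  induction l with
  | nil => simp
  | cons i l ih =>
    obtain ⟨hi, hl⟩ := List.nodup_cons.mp hl
    have hexp : Function.update (fun j => if j ∈ l then γ j - α j else γ j) i (γ i - α i) =
        fun j => if j ∈ i :: l then γ j - α j else γ j := by
      funext j
      rcases eq_or_ne j i with rfl | hj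
      · simp
      · simp [hj]
    rw [List.foldr_cons, ih hl, iterate_pderivE_const_smul, iterate_pderivE_centeredMonomial,
      smul_smul, if_neg hi, hexp, List.toFinset_cons, Finset.prod_insert (by simpa using hi),
      mul_comm]

-- The truncation in `γ - α` is harmless: where `γ i < α i`, the factor `(γ i).descFactorial (α i)`
-- is `0`.
theorem partialD_centeredMonomial (α γ : Fin n → ℕ) :
    partialD n α (centeredMonomial x γ) =
      (∏ i, ((γ i).descFactorial (α i) : ℝ)) • centeredMonomial x (γ - α) := by
  rw [partialD, foldr_iterate_pderivE_centeredMonomial x α (List.nodup_finRange n)]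
  simp [List.mem_finRange, List.toFinset_finRange, Pi.sub_def]

theorem centeredMonomial_apply_self (γ : Fin n → ℕ) :
    centeredMonomial x γ x = if γ = 0 then 1 else 0 := by
  simp [centeredMonomial, zero_pow_eq, Finset.prod_ite_zero, funext_iff]

theorem partialD_centeredMonomial_apply_self (α γ : Fin n → ℕ) :
    partialD n α (centeredMonomial x γ) x = if α = γ then ∏ i, ((γ i).factorial : ℝ) else 0 := by
  rw [partialD_centeredMonomial, Pi.smul_apply, centeredMonomial_apply_self, smul_eq_mul]
  by_cases hαγ : α = γ
  · subst hαγ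
    simp [Nat.descFactorial_self]
  rw [if_neg hαγ]
  by_cases hle : α ≤ γ
  · rw [if_neg fun h => hαγ (le_antisymm hle (tsub_eq_zero_iff_le.mp h)), mul_zero]
  · obtain ⟨i, hi⟩ : ∃ i, ¬α i ≤ γ i := by simpa [Pi.le_def] using hle
    rw [Finset.prod_eq_zero (Finset.mem_univ i)
      (by rw [Nat.descFactorial_eq_zero_iff_lt.mpr (not_le.mp hi), Nat.cast_zero]), zero_mul]

end CenteredMonomial

theorem stmt_4_general (n m : ℕ)
    (U : Set (EuclideanSpace ℝ (Fin n)))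
    (a : (Fin n → ℕ) → EuclideanSpace ℝ (Fin n) → ℝ)
    (hP : ∀ φ : EuclideanSpace ℝ (Fin n) → ℝ, ContDiffOn ℝ (m : ℕ∞) φ U → ∀ x ∈ U,
      ∑ α ∈ multiIdx n m, a α x * partialD n α φ x = 0) :
    ∀ α ∈ multiIdx n m, ∀ x ∈ U, a α x = 0 := by
  intro β hβ x hx
  have h := hP (centeredMonomial x β) ((contDiff_centeredMonomial x β).of_le le_top).contDiffOn
    x hx
  simp only [partialD_centeredMonomial_apply_self, mul_ite, mul_zero, Finset.sum_ite_eq', hβ,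
    if_true] at h
  exact (mul_eq_zero.mp h).resolve_right (by positivity)

/-- Injectivity of the natural morphism: if a differential operator of order `≤ m` with
continuous coefficients vanishes on all of `C^m(U)`, then all its coefficients vanish on `U`. -/
theorem stmt_4 (n m : ℕ) (hn : 1 ≤ n)
    (U : Set (EuclideanSpace ℝ (Fin n))) (hU : IsOpen U)
    (a : (Fin n → ℕ) → EuclideanSpace ℝ (Fin n) → ℝ)
    (ha : ∀ α ∈ multiIdx n m, ContinuousOn (a α) U)
    (hP : ∀ φ : EuclideanSpace ℝ (Fin n) → ℝ, ContDiffOn ℝ (m : ℕ∞) φ U → ∀ x ∈ U,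
      ∑ α ∈ multiIdx n m, a α x * partialD n α φ x = 0) :
    ∀ α ∈ multiIdx n m, ∀ x ∈ U, a α x = 0 :=
  stmt_4_general n m U a hP
end
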